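/- Let 𝒟 be the basic Weitzenböck derivation on ℚ[x_0, …, x_m] and, for 2 ≤ k ≤ m, let z_k = Σ_{i=0}^{k-2} (−1)^i C(k,i) x_{k-i} x_1^i x_0^{k-i-1} + (k−1)(−1)^{k+1} x_1^k. Then 𝒟(z_k) = 0, i.e. each z_k lies in the kernel of 𝒟. -/

import Mathlib

/-!
Multiplying `z_k` by `x_0` gives the classical Cayley form
`∑_{i=0}^{k} C(k,i) x_{k-i} (-x_1)^i x_0^{k-i}`. For a derivation with `D x_0 = 0` and
`D x_j = j x_{j-1}`, the derivative of its `i`-th term is `B (i+1) - B i`, where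
`B i = i C(k,i) x_{k-i} (-x_1)^{i-1} x_0^{k+1-i}` (this uses `C(k,i+1) (i+1) = C(k,i) (k-i)`),
so the sum telescopes to `B (k+1) - B 0 = 0`. As `D x_0 = 0`, this says `x_0 · D z_k = 0`,
and `x_0` is not a zero divisor.
-/

open MvPolynomial Finset

section Cayley

variable {R A : Type*} [CommSemiring R] [CommRing A] [Algebra R A]

def cayleyForm (y : ℕ → A) (k : ℕ) : A :=
  ∑ i ∈ range (k + 1), k.choose i • (y (k - i) * (-y 1) ^ i * y 0 ^ (k - i))

def cayleyElement [Algebra ℚ A] (y : ℕ → A) (k : ℕ) : A :=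
  ∑ i ∈ range (k - 1), ((-1 : ℚ) ^ i * k.choose i) • (y (k - i) * y 1 ^ i * y 0 ^ (k - i - 1))
    + ((k - 1 : ℚ) * (-1) ^ (k + 1)) • y 1 ^ k

theorem mul_cayleyElement_eq_cayleyForm [Algebra ℚ A] (y : ℕ → A) (k : ℕ) :
    y 0 * cayleyElement y k = cayleyForm y k := by
  rcases k with _ | n
  · simp [cayleyElement, cayleyForm]
  rw [cayleyElement, cayleyForm, sum_range_succ, sum_range_succ, Nat.add_sub_cancel, mul_add,
    mul_sum]
  have hterm : ∀ i ∈ range n, y 0 * (((-1 : ℚ) ^ i * (n + 1).choose i) •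
      (y (n + 1 - i) * y 1 ^ i * y 0 ^ (n + 1 - i - 1))) =
      (n + 1).choose i • (y (n + 1 - i) * (-y 1) ^ i * y 0 ^ (n + 1 - i)) := by
    intro i hi
    rw [show n + 1 - i = n - i + 1 by have := mem_range.mp hi; omega, Nat.add_sub_cancel,
      Algebra.smul_def, nsmul_eq_mul, neg_pow, pow_succ]
    simp only [map_mul, map_pow, map_neg, map_one, map_natCast]
    ring
  rw [sum_congr rfl hterm, add_assoc (∑ i ∈ range n, _), add_right_inj]
  simp only [Nat.choose_succ_self_right, Nat.choose_self, Nat.add_sub_cancel_left, Nat.sub_self,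
    nsmul_eq_mul]
  simp only [Algebra.smul_def, neg_pow (y 1), map_mul, map_pow, map_neg, map_one, map_sub,
    map_natCast]
  push_cast
  ring

variable (D : Derivation R A A) {y : ℕ → A} {k : ℕ}

theorem Derivation.apply_eq_nsmul_of_lowering (h0 : D (y 0) = 0)
    (h : ∀ j < k, D (y (j + 1)) = (j + 1) • y j) {j : ℕ} (hj : j ≤ k) :
    D (y j) = j • y (j - 1) := by
  cases j with
  | zero => simpa using h0
  | succ j => exact h j hj

theorem Derivation.apply_neg_pow_of_lowering (h : ∀ j < k, D (y (j + 1)) = (j + 1) • y j)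
    {i : ℕ} (hi : i ≤ k) : D ((-y 1) ^ i) = -(i • ((-y 1) ^ (i - 1) * y 0)) := by
  rcases Nat.eq_zero_or_pos i with rfl | hi0
  · simp
  · have h1 : D (y 1) = y 0 := by simpa using h 0 (by omega)
    rw [D.leibniz_pow, map_neg, h1, smul_eq_mul, mul_neg, smul_neg]

theorem Derivation.apply_cayleyForm_eq_zero (h0 : D (y 0) = 0)
    (h : ∀ j < k, D (y (j + 1)) = (j + 1) • y j) : D (cayleyForm y k) = 0 := by
  set B : ℕ → A := fun i => (k.choose i * i) • (y (k - i) * (-y 1) ^ (i - 1) * y 0 ^ (k + 1 - i))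
  have hterm : ∀ i ∈ range (k + 1),
      D (k.choose i • (y (k - i) * (-y 1) ^ i * y 0 ^ (k - i))) = B (i + 1) - B i := by
    intro i hi
    have hik : i ≤ k := Nat.lt_succ_iff.mp (mem_range.mp hi)
    rw [map_nsmul, D.leibniz, D.leibniz, D.leibniz_pow (y 0), h0,
      D.apply_eq_nsmul_of_lowering h0 h (Nat.sub_le k i), D.apply_neg_pow_of_lowering h hik]
    simp only [B, smul_eq_mul, nsmul_eq_mul, Nat.add_sub_add_right, Nat.sub_sub]
    rw [Nat.choose_succ_right_eq, Nat.sub_add_comm hik, pow_succ]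
    push_cast
    ring
  rw [cayleyForm, map_sum, sum_congr rfl hterm, sum_range_sub]
  simp [B]

theorem Derivation.apply_cayleyElement_eq_zero [NoZeroDivisors A] [Algebra ℚ A]
    (h0 : D (y 0) = 0) (h : ∀ j < k, D (y (j + 1)) = (j + 1) • y j) (hy0 : y 0 ≠ 0) :
    D (cayleyElement y k) = 0 := by
  have hform := D.apply_cayleyForm_eq_zero h0 h
  rw [← mul_cayleyElement_eq_cayleyForm, D.leibniz, h0, smul_zero, add_zero, smul_eq_mul] at hform
  exact (mul_eq_zero.mp hform).resolve_left hy0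

end Cayley

/-- The Cayley kernel elements
`z_k = ∑_{i=0}^{k-2} (-1)^i C(k,i) x_{k-i} x_1^i x_0^{k-i-1} + (k-1)(-1)^{k+1} x_1^k`
are annihilated by the basic Weitzenböck derivation. -/
theorem weitzenbock_cayley_kernel (m : ℕ)
    (D : Derivation ℚ (MvPolynomial (Fin (m + 1)) ℚ) (MvPolynomial (Fin (m + 1)) ℚ))
    (h0 : D (X (⟨0, by omega⟩ : Fin (m + 1))) = 0)
    (h : ∀ i : Fin (m + 1), 1 ≤ (i : ℕ) →
      D (X i) = ((i : ℕ) : ℚ) • X (⟨(i : ℕ) - 1, by have := i.isLt; omega⟩ : Fin (m + 1)))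
    (k : ℕ) (hk2 : 2 ≤ k) (hkm : k ≤ m) :
    D ((∑ i ∈ (Finset.range (k - 1)).attach,
          ((-1 : ℚ) ^ i.1 * (k.choose i.1 : ℚ)) •
            (X (⟨k - i.1, by omega⟩ : Fin (m + 1))
              * X (⟨1, by omega⟩ : Fin (m + 1)) ^ i.1
              * X (⟨0, by omega⟩ : Fin (m + 1)) ^ (k - i.1 - 1)))
        + (((k : ℚ) - 1) * (-1 : ℚ) ^ (k + 1)) • X (⟨1, by omega⟩ : Fin (m + 1)) ^ k)
      = 0 := by
  set y : ℕ → MvPolynomial (Fin (m + 1)) ℚ := fun j => if hj : j < m + 1 then X ⟨j, hj⟩ else 0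
  have hy : ∀ j (hj : j < m + 1), y j = X ⟨j, hj⟩ := fun j hj => dif_pos hj
  have hDy : ∀ j < k, D (y (j + 1)) = (j + 1) • y j := fun j hj => by
    rw [hy _ (by omega), hy _ (by omega), h _ (by simp), ← Nat.cast_smul_eq_nsmul ℚ]
    simp
  have key := D.apply_cayleyElement_eq_zero (hy 0 (by omega) ▸ h0) hDy
    (hy 0 (by omega) ▸ X_ne_zero _)
  rw [cayleyElement] at key
  convert key using 3
  · refine Eq.trans (sum_congr rfl fun i _ => ?_) (sum_attach _ _)
    rw [hy (k - i) (by omega), hy 1 (by omega), hy 0 (by omega)]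
  · rw [hy 1 (by omega)]
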